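/- arXiv:math/0509350 — 6 statements merged into one kernel-verified Lean document; each statement's English description precedes it below -/
import Mathlib

section
/- Let X₁, X₂ be elements of a commutative ring. The determinant of the 4×4 matrix whose first two rows are (1, Xᵢ, Xᵢ², Xᵢ³) for i = 1, 2 and whose last two rows are (1, 2Xᵢ, 3Xᵢ², 4Xᵢ³) for i = 1, 2 equals −X₁X₂(X₂ − X₁)⁴. -/
theorem det_4x4_confluent {R : Type*} [CommRing R] (X₁ X₂ : R) :
    Matrix.det !![1, X₁, X₁ ^ 2, X₁ ^ 3;
                  1, X₂, X₂ ^ 2, X₂ ^ 3;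
                  1, 2 * X₁, 3 * X₁ ^ 2, 4 * X₁ ^ 3;
                  1, 2 * X₂, 3 * X₂ ^ 2, 4 * X₂ ^ 3]
      = -(X₁ * X₂ * (X₂ - X₁) ^ 4) := by
  rw [Matrix.det_succ_row_zero]
  simp [Fin.sum_univ_succ, Fin.succAbove, Matrix.det_fin_three]
  ring
end

section
/- Let m ≥ 1 and let X₁, …, X_m be elements of a commutative ring. Let A be the 2m×2m matrix whose i-th row (for 1 ≤ i ≤ m) is (Xᵢ⁰, Xᵢ¹, …, Xᵢ^{2m−1}) and whose (m+i)-th row (for 1 ≤ i ≤ m) is (1·Xᵢ⁰, 2·Xᵢ¹, …, 2m·Xᵢ^{2m−1}). Then det A = (−1)^{m(m−1)/2} · (∏_{i=1}^m Xᵢ) · ∏_{1 ≤ i < j ≤ m} (X_j − Xᵢ)⁴. -/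
/-!
Subtracting the `i`-th row from the `(m+i)`-th turns the bottom rows `((j+1) Xᵢʲ)ⱼ` into
`Xᵢ (j Xᵢ^(j-1))ⱼ`, so `det A = (∏ Xᵢ) · det C` for the confluent Vandermonde matrix `C` whose
rows are the powers of `Xᵢ` and their derivatives. For `det C`, take the Vandermonde matrix at
the nodes `Xᵢ` and `Xᵢ + tᵢ` over `R[t₁, …, tₘ]`: subtracting rows again, the bottom rows become
`tᵢ` times divided differences of the powers, which specialise to the derivatives at `t = 0`.
Cancelling the regular element `∏ tᵢ` against the factor `∏ᵢ ((Xᵢ + tᵢ) - Xᵢ)` of the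
Vandermonde product and setting `t = 0` gives
`det C = V · ∏_{i ≠ j} (Xᵢ - Xⱼ) · V = (-1)^(m(m-1)/2) · V⁴`, with `V` the Vandermonde
determinant of the `Xᵢ`.
-/

open Finset

theorem Finset.prod_Ioi_eq_prod_ite {α M : Type*} [Fintype α] [LinearOrder α]
    [LocallyFiniteOrderTop α] [CommMonoid M] (i : α) (f : α → M) :
    ∏ j ∈ Ioi i, f j = ∏ j, if i < j then f j else 1 := by
  rw [← prod_filter, filter_lt_eq_Ioi]

theorem Fin.sum_card_Ioi (m : ℕ) : ∑ i : Fin m, #(Ioi i) = m * (m - 1) / 2 := by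
  simp only [Fin.card_Ioi]
  rw [Fin.sum_univ_eq_sum_range (fun i => m - 1 - i), sum_range_reflect (fun i => i),
    sum_range_id]

namespace Matrix

variable {S : Type*} [CommRing S]

section Vandermonde

variable {m : ℕ}

theorem det_vandermonde_eq_prod_filter_lt (x : Fin m → S) :
    det (vandermonde x) =
      ∏ p ∈ univ.filter (fun p : Fin m × Fin m => p.1 < p.2), (x p.2 - x p.1) := by
  rw [det_vandermonde, prod_filter, Fintype.prod_prod_type]
  simp only [prod_Ioi_eq_prod_ite]

theorem prod_prod_Ioi_sub_eq_neg_one_pow_mul_det_vandermonde (x : Fin m → S) :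
    ∏ i, ∏ j ∈ Ioi i, (x i - x j) = (-1) ^ (m * (m - 1) / 2) * det (vandermonde x) := by
  calc ∏ i, ∏ j ∈ Ioi i, (x i - x j) = ∏ i, ∏ j ∈ Ioi i, -(x j - x i) := by simp only [neg_sub]
    _ = _ := by
      rw [det_vandermonde]
      simp only [prod_neg, prod_mul_distrib, prod_pow_eq_pow_sum, Fin.sum_card_Ioi]

theorem prod_prod_erase_sub_eq_neg_one_pow_mul_det_vandermonde_sq (x : Fin m → S) :
    ∏ i, ∏ j ∈ univ.erase i, (x i - x j) =
      (-1) ^ (m * (m - 1) / 2) * det (vandermonde x) ^ 2 := by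
  have split (i : Fin m) : ∏ j ∈ univ.erase i, (x i - x j) =
      (∏ j, if i < j then x i - x j else 1) * ∏ j, if j < i then x i - x j else 1 := by
    rw [← filter_ne' univ i, prod_filter, ← prod_mul_distrib]
    refine prod_congr rfl fun j _ => ?_
    rcases lt_trichotomy i j with h | rfl | h
    · simp [h, h.ne', h.not_gt]
    · simp
    · simp [h, h.ne, h.not_gt]
  have lower : ∏ i, ∏ j, (if j < i then x i - x j else 1) = det (vandermonde x) := by
    rw [prod_comm, det_vandermonde]
    simp only [prod_Ioi_eq_prod_ite]
  simp only [split, prod_mul_distrib, lower, ← prod_Ioi_eq_prod_ite,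
    prod_prod_Ioi_sub_eq_neg_one_pow_mul_det_vandermonde]
  ring

theorem det_vandermonde_append {n : ℕ} (x : Fin m → S) (y : Fin n → S) :
    det (vandermonde (Fin.append x y)) =
      det (vandermonde x) * (∏ a, ∏ b, (y b - x a)) * det (vandermonde y) := by
  have castAdd_lt_castAdd (a a' : Fin m) : Fin.castAdd n a < Fin.castAdd n a' ↔ a < a' := .rfl
  have castAdd_lt_natAdd (a : Fin m) (b : Fin n) : Fin.castAdd n a < Fin.natAdd m b := by
    simp only [Fin.lt_def, Fin.val_castAdd, Fin.val_natAdd]; omega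
  simp only [det_vandermonde, prod_Ioi_eq_prod_ite, Fin.prod_univ_add, Fin.append_left,
    Fin.append_right, castAdd_lt_castAdd, castAdd_lt_natAdd, (castAdd_lt_natAdd _ _).not_gt,
    Fin.natAdd_lt_natAdd_iff, if_true, if_false, prod_const_one, prod_mul_distrib]
  ring

end Vandermonde

section Rows

variable {ι : Type*}

def powerRows (x : ι → S) (n : ℕ) : Matrix ι (Fin n) S :=
  of fun i j => x i ^ (j : ℕ)

/-- The derivatives of the powers; at `j = 0` the truncated exponent `0 - 1 = 0` is harmless
because the coefficient vanishes. -/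
def derivRows (x : ι → S) (n : ℕ) : Matrix ι (Fin n) S :=
  of fun i j => ((j : ℕ) : S) * x i ^ ((j : ℕ) - 1)

/-- The divided differences `(y i ^ j - x i ^ j) / (y i - x i)`, written as polynomials. -/
def divDiffRows (x y : ι → S) (n : ℕ) : Matrix ι (Fin n) S :=
  of fun i j => ∑ k ∈ range j, y i ^ k * x i ^ ((j : ℕ) - 1 - k)

theorem divDiffRows_self (x : ι → S) (n : ℕ) : divDiffRows x x n = derivRows x n := by
  ext i j
  simp only [divDiffRows, derivRows, of_apply, geom_sum₂_self]

variable [Fintype ι] [DecidableEq ι]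

theorem powerRows_add (x t : ι → S) (n : ℕ) :
    powerRows (x + t) n = powerRows x n + diagonal t * divDiffRows x (x + t) n := by
  ext i j
  have := Commute.geom_sum₂_mul (Commute.all (x i + t i) (x i)) j
  simp only [powerRows, divDiffRows, diagonal_mul, add_apply, of_apply, Pi.add_apply]
  linear_combination (-1 : S) * this

theorem powerRows_add_diagonal_mul_derivRows (x : ι → S) (n : ℕ) :
    powerRows x n + diagonal x * derivRows x n =
      of fun i (j : Fin n) => ((j : ℕ) + 1 : S) * x i ^ (j : ℕ) := by
  ext i j
  simp only [powerRows, derivRows, diagonal_mul, add_apply, of_apply]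
  rcases eq_or_ne (j : ℕ) 0 with hj | hj
  · simp [hj]
  · rw [mul_left_comm, mul_pow_sub_one hj]
    ring

theorem det_fromRows_add_diagonal_mul {κ : Type*} [Fintype κ] [DecidableEq κ] (e : κ ≃ ι ⊕ ι)
    (A B : Matrix ι κ S) (d : ι → S) :
    det ((fromRows A (A + diagonal d * B)).submatrix e id) =
      (∏ i, d i) * det ((fromRows A B).submatrix e id) := by
  have hL : fromRows A (A + diagonal d * B) =
      (fromBlocks 1 0 1 (diagonal d) : Matrix (ι ⊕ ι) (ι ⊕ ι) S) * fromRows A B := by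
    simp [fromBlocks_mul_fromRows]
  rw [hL, ← submatrix_mul_equiv _ _ e e id, det_mul, det_submatrix_equiv_self,
    det_fromBlocks_zero₁₂, det_one, one_mul, det_diagonal]

end Rows

theorem fromRows_powerRows_submatrix {m n : ℕ} (x : Fin m → S) (y : Fin n → S) :
    (fromRows (powerRows x (m + n)) (powerRows y (m + n))).submatrix finSumFinEquiv.symm id =
      vandermonde (Fin.append x y) := by
  ext i j
  refine Fin.addCases (fun a => ?_) (fun b => ?_) i <;> simp [powerRows]

def confluentVandermonde {m : ℕ} (x : Fin m → S) : Matrix (Fin (m + m)) (Fin (m + m)) S :=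
  (fromRows (powerRows x (m + m)) (derivRows x (m + m))).submatrix finSumFinEquiv.symm id

open MvPolynomial in
theorem det_confluentVandermonde {m : ℕ} (x : Fin m → S) :
    det (confluentVandermonde x) = (-1) ^ (m * (m - 1) / 2) * det (vandermonde x) ^ 4 := by
  set x' : Fin m → MvPolynomial (Fin m) S := fun i => C (x i)
  set N := (fromRows (powerRows x' (m + m)) (divDiffRows x' (x' + X) (m + m))).submatrix
    finSumFinEquiv.symm id
  have hN : det (vandermonde (Fin.append x' (x' + X))) = (∏ i, X i) * det N := by
    rw [← fromRows_powerRows_submatrix, powerRows_add, det_fromRows_add_diagonal_mul]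
  have hV : det (vandermonde (Fin.append x' (x' + X))) = (∏ i, X i) *
      (det (vandermonde x') * (∏ b, ∏ a ∈ univ.erase b, (x' b + X b - x' a)) *
        det (vandermonde (x' + X))) := by
    rw [det_vandermonde_append, prod_comm]
    simp only [← prod_congr rfl fun b _ => mul_prod_erase univ _ (mem_univ b), Pi.add_apply,
      add_sub_cancel_left, prod_mul_distrib]
    ring
  have hN_eq := congrArg (eval 0) ((isRegular_prod_X univ).left (hN.symm.trans hV))
  have hN_eval : N.map (eval 0) = confluentVandermonde x := by
    ext i j
    obtain ⟨a | b, rfl⟩ := finSumFinEquiv.surjective i <;>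
      simp only [N, confluentVandermonde, map_apply, submatrix_apply, Equiv.symm_apply_apply,
        fromRows_apply_inl, fromRows_apply_inr] <;>
      simp [x', powerRows, divDiffRows, derivRows, geom_sum₂_self]
  simp only [RingHom.map_det, RingHom.mapMatrix_apply, hN_eval, map_mul, det_vandermonde,
    map_prod, map_sub, map_add, Pi.add_apply, x', eval_C, eval_X, Pi.zero_apply,
    add_zero] at hN_eq
  rw [hN_eq, prod_prod_erase_sub_eq_neg_one_pow_mul_det_vandermonde_sq, det_vandermonde]
  ring

end Matrix

open Matrix in
theorem det_confluent_vandermonde {R : Type*} [CommRing R] (m : ℕ)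
    (X : Fin m → R) :
    Matrix.det (Matrix.of fun i j : Fin (2 * m) =>
      if h : (i : ℕ) < m then X ⟨i, h⟩ ^ (j : ℕ)
      else (((j : ℕ) + 1 : ℕ) : R) * X ⟨(i : ℕ) - m, by have := i.isLt; omega⟩ ^ (j : ℕ))
    = (-1) ^ (m * (m - 1) / 2) * (∏ i, X i) *
        ∏ p ∈ Finset.univ.filter (fun p : Fin m × Fin m => p.1 < p.2),
          (X p.2 - X p.1) ^ 4 := by
  rw [← det_submatrix_equiv_self (finCongr (two_mul m)).symm]
  convert_to det ((fromRows (powerRows X (m + m))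
      (powerRows X (m + m) + diagonal X * derivRows X (m + m))).submatrix
        finSumFinEquiv.symm id) = _ using 2
  · ext i j
    obtain ⟨a | b, rfl⟩ := finSumFinEquiv.surjective i <;>
      simp only [submatrix_apply, Equiv.symm_apply_apply, fromRows_apply_inl,
        fromRows_apply_inr, powerRows_add_diagonal_mul_derivRows] <;>
      simp [powerRows]
  rw [det_fromRows_add_diagonal_mul, ← confluentVandermonde, det_confluentVandermonde, prod_pow,
    det_vandermonde_eq_prod_filter_lt]
  ring
end

section
/- Let n ≥ l ≥ 1 and let X₁ be an element of a commutative ring. The determinant of the l×l matrix whose (k, j)-entry (with 1 ≤ k, j ≤ l) is C(n + j − 1, k − 1)·X₁^{j−1} equals X₁^{l(l−1)/2}. -/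
open Finset

lemma nat_vdm (n j k l : ℕ) (hk : k < l) :
    ∑ i ∈ Finset.range l, (if i ≤ k then n.choose (k - i) else 0) * j.choose i
      = (n + j).choose k := by
  rw [add_comm n j, Nat.add_choose_eq,
    Finset.Nat.sum_antidiagonal_eq_sum_range_succ_mk]
  rw [← Finset.sum_subset (Finset.range_subset_range.2 hk)
    (by intro x _ hx; simp at hx; rw [if_neg (by omega)]; ring)]
  apply Finset.sum_congr rfl
  intro i hi
  simp only [Finset.mem_range] at hi
  rw [if_pos (by omega), mul_comm]

theorem det_binom_power_single {R : Type*} [CommRing R] (n l : ℕ) (hl : 1 ≤ l)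
    (hn : l ≤ n) (X₁ : R) :
    Matrix.det (Matrix.of fun k j : Fin l =>
      (((n + (j : ℕ)).choose (k : ℕ) : ℕ) : R) * X₁ ^ (j : ℕ))
    = X₁ ^ (l * (l - 1) / 2) := by
  set A : Matrix (Fin l) (Fin l) R :=
    Matrix.of fun k i : Fin l =>
      if (i : ℕ) ≤ (k : ℕ) then ((n.choose ((k : ℕ) - (i : ℕ)) : ℕ) : R) else 0 with hA
  set B : Matrix (Fin l) (Fin l) R :=
    Matrix.of fun i j : Fin l => (((j : ℕ).choose (i : ℕ) : ℕ) : R) * X₁ ^ (j : ℕ) with hB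
  have hfac : (Matrix.of fun k j : Fin l =>
      (((n + (j : ℕ)).choose (k : ℕ) : ℕ) : R) * X₁ ^ (j : ℕ)) = A * B := by
    ext k j
    simp only [Matrix.mul_apply, hA, hB, Matrix.of_apply]
    simp only [← mul_assoc]
    rw [← Finset.sum_mul]
    congr 1
    have := nat_vdm n (j : ℕ) (k : ℕ) l k.isLt
    rw [← this, Nat.cast_sum, Finset.sum_range fun i => _]
    apply Finset.sum_congr rfl
    intro i _
    push_cast [apply_ite (Nat.cast : ℕ → R)]
    ring
  rw [hfac, Matrix.det_mul]
  have hdetA : A.det = 1 := by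
    rw [Matrix.det_of_lowerTriangular A (by
      intro i j hij
      simp only [hA, Matrix.of_apply]
      rw [if_neg (by exact_mod_cast not_le.2 hij)])]
    simp [hA]
  have hdetB : B.det = X₁ ^ (l * (l - 1) / 2) := by
    rw [Matrix.det_of_upperTriangular (M := B) (by
      intro i j hij
      simp only [hB, Matrix.of_apply]
      rw [Nat.choose_eq_zero_of_lt (by exact_mod_cast hij)]
      simp)]
    have : ∀ i : Fin l, B i i = X₁ ^ (i : ℕ) := by
      intro i; simp [hB]
    rw [Finset.prod_congr rfl fun i _ => this i, Finset.prod_pow_eq_pow_sum]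
    congr 1
    rw [show (∑ i : Fin l, (i : ℕ)) = ∑ i ∈ Finset.range l, i from
      Fin.sum_univ_eq_sum_range (fun i => i) l]
    exact Finset.sum_range_id l
  rw [hdetA, hdetB, one_mul]
end

section
/- Let n ≥ 2 and let X₁, X₂ be elements of a commutative ring. The determinant of the 4×4 matrix with rows (1, X₁, X₁², X₁³), (n·1, (n+1)X₁, (n+2)X₁², (n+3)X₁³), (1, X₂, X₂², X₂³), (n·1, (n+1)X₂, (n+2)X₂², (n+3)X₂³) equals X₁X₂(X₂ − X₁)⁴. -/
/-!
Since `(c + j) xʲ = c · xʲ + x · (j xʲ⁻¹)`, the second row of each block is `c` times the first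
row plus `x` times its derivative. Hence the matrix factors as a block lower-bidiagonal matrix of
determinant `x y` times the confluent Vandermonde matrix of the nodes `x, y` (each of multiplicity
two), whose determinant is `(y - x) ^ 4`.
-/

section
variable {R : Type*} [CommRing R]

theorem det_confluentVandermonde_fin_four (x y : R) :
    Matrix.det !![1, x, x ^ 2, x ^ 3;
                  0, 1, 2 * x, 3 * x ^ 2;
                  1, y, y ^ 2, y ^ 3;
                  0, 1, 2 * y, 3 * y ^ 2] = (y - x) ^ 4 := by
  simp [Matrix.det_succ_row_zero, Fin.sum_univ_succ, Fin.succAbove]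
  ring

theorem det_blockLowerBidiagonal_fin_four (c x y : R) :
    Matrix.det !![1, 0, 0, 0;
                  c, x, 0, 0;
                  0, 0, 1, 0;
                  0, 0, c, y] = x * y := by
  simp [Matrix.det_succ_row_zero, Fin.sum_univ_succ]

theorem blockBinomPower_eq_mul_confluentVandermonde (c x y : R) :
    !![1, x, x ^ 2, x ^ 3;
       c, (c + 1) * x, (c + 2) * x ^ 2, (c + 3) * x ^ 3;
       1, y, y ^ 2, y ^ 3;
       c, (c + 1) * y, (c + 2) * y ^ 2, (c + 3) * y ^ 3] =
    !![1, 0, 0, 0; c, x, 0, 0; 0, 0, 1, 0; 0, 0, c, y] *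
    !![1, x, x ^ 2, x ^ 3;
       0, 1, 2 * x, 3 * x ^ 2;
       1, y, y ^ 2, y ^ 3;
       0, 1, 2 * y, 3 * y ^ 2] := by
  ext i j
  fin_cases i <;> fin_cases j <;> simp [Matrix.mul_apply, Fin.sum_univ_four] <;> ring

theorem det_blockBinomPower (c x y : R) :
    Matrix.det !![1, x, x ^ 2, x ^ 3;
                  c, (c + 1) * x, (c + 2) * x ^ 2, (c + 3) * x ^ 3;
                  1, y, y ^ 2, y ^ 3;
                  c, (c + 1) * y, (c + 2) * y ^ 2, (c + 3) * y ^ 3] = x * y * (y - x) ^ 4 := by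
  rw [blockBinomPower_eq_mul_confluentVandermonde, Matrix.det_mul,
    det_blockLowerBidiagonal_fin_four, det_confluentVandermonde_fin_four]

end

theorem det_block_binom_power_m2_l2_general {R : Type*} [CommRing R] (n : ℕ)
    (X₁ X₂ : R) :
    Matrix.det !![1, X₁, X₁ ^ 2, X₁ ^ 3;
                  (n : R) * 1, ((n : R) + 1) * X₁, ((n : R) + 2) * X₁ ^ 2, ((n : R) + 3) * X₁ ^ 3;
                  1, X₂, X₂ ^ 2, X₂ ^ 3;
                  (n : R) * 1, ((n : R) + 1) * X₂, ((n : R) + 2) * X₂ ^ 2, ((n : R) + 3) * X₂ ^ 3]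
      = X₁ * X₂ * (X₂ - X₁) ^ 4 := by
  rw [mul_one]
  exact det_blockBinomPower _ _ _

theorem det_block_binom_power_m2_l2 {R : Type*} [CommRing R] (n : ℕ) (hn : 2 ≤ n)
    (X₁ X₂ : R) :
    Matrix.det !![1, X₁, X₁ ^ 2, X₁ ^ 3;
                  (n : R) * 1, ((n : R) + 1) * X₁, ((n : R) + 2) * X₁ ^ 2, ((n : R) + 3) * X₁ ^ 3;
                  1, X₂, X₂ ^ 2, X₂ ^ 3;
                  (n : R) * 1, ((n : R) + 1) * X₂, ((n : R) + 2) * X₂ ^ 2, ((n : R) + 3) * X₂ ^ 3]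
      = X₁ * X₂ * (X₂ - X₁) ^ 4 :=
  det_block_binom_power_m2_l2_general n X₁ X₂
end

section
/- For fixed n ≥ 1 and m ≥ 1, the determinant of the ml×ml block binomial-power matrix A with blocks Aᵢ = [C(n+j−1, k−1)·Xᵢ^{j−1}] (1 ≤ k ≤ l, 1 ≤ j ≤ ml, 1 ≤ i ≤ m), viewed as a polynomial in ℤ[X₁, …, X_m], is divisible by (X_j − Xᵢ)^{l²} for every pair 1 ≤ i < j ≤ m. -/
/-!
Put `d = y - x` and expand every row at the point `y` binomially in `d`. By multilinearity,
`det A = ∑ₚ d ^ (∑ᵣ p r) * det Wₚ`, where a row of `Wₚ` at `y` with parameter `k` reads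
`c ↦ C(n + c, k) C(c, p r) x ^ (c - p r)`. Up to the scalar `x ^ (-p r)` this is
`c ↦ q c * x ^ c` for a polynomial `q` of degree `≤ k + p r`; the rows at `x` have this form
with degree `≤ k`. Rows of degree `≤ D` lie in a space of dimension `≤ D + 1`, so if the `2l`
rows at `x` and `y` are independent, their degrees dominate `0, 1, …, 2l - 1`:
`C(2l, 2) ≤ 2 C(l, 2) + ∑ p`, i.e. `∑ p ≥ l²`. So every term with `∑ p < l²` vanishes.
-/

open Finset Polynomial

theorem Finset.choose_two_card_le_sum {ι : Type*} (s : Finset ι) (e : ι → ℕ)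
    (he : ∀ D, #{x ∈ s | e x ≤ D} ≤ D + 1) : (#s).choose 2 ≤ ∑ x ∈ s, e x := by
  classical
  induction s using Finset.induction_on_max_value e with
  | empty => simp
  | insert a s has hmax ih =>
    have hcard : #s ≤ e a := by
      have := he (e a)
      rwa [filter_insert, if_pos le_rfl, card_insert_of_notMem (by simp [has]),
        filter_true_of_mem hmax, add_le_add_iff_right] at this
    have hs := ih fun D => (card_le_card (filter_subset_filter _ (subset_insert a s))).trans (he D)
    have hchoose : (#s + 1).choose 2 = (#s).choose 2 + #s := by
      simp [Nat.choose_succ_succ', add_comm]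
    rw [card_insert_of_notMem has, sum_insert has, hchoose]
    omega

theorem LinearIndependent.choose_two_card_le_sum_of_mem_map_degreeLT {K M ι : Type*} [Field K]
    [AddCommGroup M] [Module K M] [Fintype ι] (L : K[X] →ₗ[K] M) {v : ι → M}
    (hv : LinearIndependent K v) (e : ι → ℕ)
    (hve : ∀ s, v s ∈ (degreeLT K (e s + 1)).map L) :
    (Fintype.card ι).choose 2 ≤ ∑ s, e s := by
  refine Finset.choose_two_card_le_sum univ e fun D => ?_
  set T := ({s | e s ≤ D} : Finset ι)
  have hT : LinearIndependent K (fun s : T => v s) := hv.comp _ Subtype.val_injective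
  have hspan : Submodule.span K (Set.range fun s : T => v s) ≤ (degreeLT K (D + 1)).map L :=
    Submodule.span_le.2 <| Set.range_subset_iff.2 fun s =>
      Submodule.map_mono (degreeLT_mono (by have := (mem_filter.1 s.2).2; omega)) (hve s)
  calc #T = Module.finrank K (Submodule.span K (Set.range fun s : T => v s)) := by
        rw [finrank_span_eq_card hT, Fintype.card_coe]
    _ ≤ Module.finrank K ((degreeLT K (D + 1)).map L) := Submodule.finrank_mono hspan
    _ ≤ Module.finrank K (degreeLT K (D + 1)) := Submodule.finrank_map_le _ _
    _ = D + 1 := by simp [(degreeLTEquiv K (D + 1)).finrank_eq]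

theorem exists_natDegree_le_eval_natCast_eq_choose (K : Type*) [Field K] [CharZero K]
    (a k : ℕ) :
    ∃ q : K[X], q.natDegree ≤ k ∧ ∀ c : ℕ, q.eval (c : K) = (a + c).choose k := by
  refine ⟨C (k.factorial : K)⁻¹ * (descPochhammer K k).comp (X + C (a : K)), ?_, fun c => ?_⟩
  · refine (natDegree_C_mul_le _ _).trans ?_
    rw [natDegree_comp, natDegree_X_add_C, descPochhammer_natDegree, mul_one]
  · rw [eval_mul, eval_C, eval_comp, eval_add, eval_X, eval_C, add_comm, ← Nat.cast_add,
      descPochhammer_eval_eq_descFactorial, Nat.descFactorial_eq_factorial_mul_choose]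
    push_cast
    exact inv_mul_cancel_left₀ (Nat.cast_ne_zero.2 k.factorial_ne_zero) _

def evalMulPow {R ι : Type*} [CommSemiring R] (x : R) (deg : ι → ℕ) :
    R[X] →ₗ[R] ι → R where
  toFun q c := q.eval (deg c : R) * x ^ deg c
  map_add' p q := by ext; simp [add_mul]
  map_smul' a q := by ext; simp [mul_assoc]

theorem choose_mul_choose_mul_pow_sub_mem_map_degreeLT {K ι : Type*} [Field K] [CharZero K]
    {x : K} (hx : x ≠ 0) (deg : ι → ℕ) (n k t : ℕ) :
    (fun c => ((n + deg c).choose k : K) * (deg c).choose t * x ^ (deg c - t)) ∈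
      (degreeLT K (k + t + 1)).map (evalMulPow x deg) := by
  obtain ⟨q₁, hq₁, hq₁_eval⟩ := exists_natDegree_le_eval_natCast_eq_choose K n k
  obtain ⟨q₂, hq₂, hq₂_eval⟩ := exists_natDegree_le_eval_natCast_eq_choose K 0 t
  refine ⟨C (x ^ t)⁻¹ * (q₁ * q₂), mem_degreeLT.2 ?_, funext fun c => ?_⟩
  · have hdeg := ((natDegree_C_mul_le (x ^ t)⁻¹ (q₁ * q₂)).trans natDegree_mul_le).trans
      (add_le_add hq₁ hq₂)
    exact degree_le_natDegree.trans_lt (by exact_mod_cast Nat.lt_succ_of_le hdeg)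
  · simp only [evalMulPow, LinearMap.coe_mk, AddHom.coe_mk, eval_mul, eval_C, hq₁_eval,
      hq₂_eval, zero_add]
    rcases le_or_gt t (deg c) with htc | htc
    · rw [pow_sub₀ x hx htc]
      ring
    · simp [Nat.choose_eq_zero_of_lt htc]

theorem Matrix.det_eq_zero_of_sum_lt_sq {K ι : Type*} [Field K] [CharZero K] [Fintype ι]
    [DecidableEq ι] {x : K} (hx : x ≠ 0) (n : ℕ) (deg : ι → ℕ) {l : ℕ}
    (a b : Fin l → ι) (hab : Function.Injective (Sum.elim a b)) (t : Fin l → ℕ)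
    (ht : ∑ k, t k < l ^ 2)
    (W : Matrix ι ι K) (ha : ∀ k c, W (a k) c = ((n + deg c).choose k : K) * x ^ deg c)
    (hb : ∀ k c,
      W (b k) c = ((n + deg c).choose k : K) * (deg c).choose (t k) * x ^ (deg c - t k)) :
    W.det = 0 := by
  by_contra hW
  have hcount := ((Matrix.linearIndependent_rows_of_det_ne_zero hW).comp _
    hab).choose_two_card_le_sum_of_mem_map_degreeLT (evalMulPow x deg)
    (Sum.elim (fun k => k) (fun k => k + t k)) ?_
  · have hgauss : ∑ k : Fin l, (k : ℕ) = l.choose 2 := by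
      rw [Fin.sum_univ_eq_sum_range (fun k => k), sum_range_id, Nat.choose_two_right]
    have hvandermonde : (l + l).choose 2 = 2 * l.choose 2 + l ^ 2 := by
      simp [Nat.add_choose_eq, Finset.Nat.sum_antidiagonal_succ]
      ring
    simp only [Fintype.card_sum, Fintype.card_fin, Fintype.sum_sum_type, Sum.elim_inl,
      Sum.elim_inr, sum_add_distrib, hgauss, hvandermonde] at hcount
    omega
  · rintro (k | k)
    · show W (a k) ∈ _
      simpa [funext (ha k)] using choose_mul_choose_mul_pow_sub_mem_map_degreeLT hx deg n k 0
    · show W (b k) ∈ _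
      simpa [funext (hb k)] using choose_mul_choose_mul_pow_sub_mem_map_degreeLT hx deg n k (t k)

theorem Matrix.pow_dvd_det_of_row_eq_sum {R ι : Type*} [CommRing R] [Fintype ι] [DecidableEq ι]
    {M : Matrix ι ι R} (d : R) (s : ι → Finset ℕ) (w : ι → ℕ → ι → R)
    (hM : ∀ r, M r = ∑ t ∈ s r, d ^ t • w r t) {L : ℕ}
    (hw : ∀ p ∈ Fintype.piFinset s, ∑ r, p r < L → (Matrix.of fun r => w r (p r)).det = 0) :
    d ^ L ∣ M.det := by
  have hexpand : M.det =
      ∑ p ∈ Fintype.piFinset s, d ^ (∑ r, p r) * (Matrix.of fun r => w r (p r)).det := by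
    change Matrix.detRowAlternating M = _
    rw [show M = fun r => ∑ t ∈ s r, d ^ t • w r t from funext hM,
      ← AlternatingMap.coe_multilinearMap, MultilinearMap.map_sum_finset]
    refine sum_congr rfl fun p _ => ?_
    rw [MultilinearMap.map_smul_univ, prod_pow_eq_pow_sum, smul_eq_mul]
    rfl
  rw [hexpand]
  refine dvd_sum fun p hp => ?_
  by_cases hL : L ≤ ∑ r, p r
  · exact (pow_dvd_pow d hL).mul_right _
  · simp [hw p hp (by omega)]

theorem add_pow_eq_sum_range_of_lt {R : Type*} [CommSemiring R] (d x : R) {e N : ℕ}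
    (h : e < N) :
    (d + x) ^ e = ∑ t ∈ range N, d ^ t * (e.choose t * x ^ (e - t)) := by
  rw [add_pow]
  refine (sum_congr rfl fun t _ => by ring).trans
    (sum_subset (range_subset_range.2 h) fun t _ ht => ?_)
  simp [Nat.choose_eq_zero_of_lt (by simpa using ht : e < t)]

theorem sub_pow_sq_dvd_det_choose_mul_pow {R ι : Type*} [CommRing R] [IsDomain R] [CharZero R]
    [Fintype ι] [DecidableEq ι] (n : ℕ) (deg kind : ι → ℕ) (pt : ι → R) {x y : R}
    (hx : x ≠ 0) (hxy : x ≠ y) {l : ℕ} (a b : Fin l → ι)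
    (hpa : ∀ k, pt (a k) = x) (hpb : ∀ k, pt (b k) = y)
    (hka : ∀ k, kind (a k) = k) (hkb : ∀ k, kind (b k) = k) :
    (y - x) ^ (l ^ 2) ∣
      (Matrix.of fun r c => ((n + deg c).choose (kind r) : R) * pt r ^ deg c).det := by
  classical
  set M := Matrix.of fun r c => ((n + deg c).choose (kind r) : R) * pt r ^ deg c
  set N := univ.sup deg + 1
  have hN : ∀ c, deg c < N := fun c => Nat.lt_succ_of_le (le_sup (mem_univ c))
  let s : ι → Finset ℕ := fun r => if pt r = y then range N else {0}
  let w : ι → ℕ → ι → R := fun r t => if pt r = y then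
    fun c => ((n + deg c).choose (kind r) : R) * (deg c).choose t * x ^ (deg c - t) else M r
  refine Matrix.pow_dvd_det_of_row_eq_sum (y - x) s w (fun r => ?_) fun p hp hp_sum => ?_
  · by_cases hr : pt r = y
    · ext c
      simp only [s, w, M, hr, if_true, Finset.sum_apply, Pi.smul_apply, smul_eq_mul,
        Matrix.of_apply]
      conv_lhs => rw [← sub_add_cancel y x, add_pow_eq_sum_range_of_lt _ _ (hN c), mul_sum]
      exact sum_congr rfl fun t _ => by ring
    · simp [s, w, hr]
  · have hab : Function.Injective (Sum.elim a b) :=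
      .sumElim (fun k k' h => Fin.ext (by rw [← hka k, ← hka k', h]))
        (fun k k' h => Fin.ext (by rw [← hkb k, ← hkb k', h]))
        fun k k' h => hxy (by rw [← hpa k, h, hpb k'])
    have hsum : ∑ k, p (b k) < l ^ 2 := calc
      ∑ k, p (b k) = ∑ r ∈ univ.map ⟨b, hab.comp Sum.inr_injective⟩, p r := by
        rw [sum_map]; rfl
      _ ≤ ∑ r, p r := sum_le_sum_of_subset (subset_univ _)
      _ < l ^ 2 := hp_sum
    have hinj := IsFractionRing.injective R (FractionRing R)
    have : CharZero (FractionRing R) := charZero_of_injective_algebraMap hinj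
    rw [← map_eq_zero_iff _ hinj, RingHom.map_det]
    refine Matrix.det_eq_zero_of_sum_lt_sq ((map_ne_zero_iff _ hinj).2 hx) n deg a b hab _ hsum _
      (fun k c => ?_) (fun k c => ?_)
    · simp [w, M, hpa, hka, hxy]
    · simp [w, hpb, hkb]

theorem det_block_binom_power_dvd_general (m n l : ℕ) :
    ∀ i j : Fin m, i < j →
      (MvPolynomial.X j - MvPolynomial.X i) ^ (l ^ 2) ∣
        Matrix.det (Matrix.of fun r c : Fin (m * l) =>
          (((n + (c : ℕ)).choose ((r : ℕ) % l) : ℕ) :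
              MvPolynomial (Fin m) ℤ) *
            MvPolynomial.X
              (⟨(r : ℕ) / l, Nat.div_lt_of_lt_mul (Nat.mul_comm m l ▸ r.isLt)⟩ : Fin m)
              ^ (c : ℕ)) := by
  intro i j hij
  have hblock (a : Fin m) (k : Fin l) :
      (finProdFinEquiv (a, k)).divNat = a ∧ (finProdFinEquiv (a, k)).modNat = k :=
    Prod.ext_iff.1 (finProdFinEquiv.symm_apply_apply (a, k))
  exact sub_pow_sq_dvd_det_choose_mul_pow n (fun c : Fin (m * l) => (c : ℕ))
    (fun r => (r.modNat : ℕ)) (fun r => MvPolynomial.X r.divNat)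
    (MvPolynomial.X_ne_zero i) ((MvPolynomial.X_injective (R := ℤ)).ne hij.ne)
    (fun k => finProdFinEquiv (i, k)) (fun k => finProdFinEquiv (j, k))
    (fun k => congrArg _ (hblock i k).1) (fun k => congrArg _ (hblock j k).1)
    (fun k => congrArg _ (hblock i k).2) (fun k => congrArg _ (hblock j k).2)

theorem det_block_binom_power_dvd (m n l : ℕ) (hm : 1 ≤ m) (hn : 1 ≤ n) :
    ∀ i j : Fin m, i < j →
      (MvPolynomial.X j - MvPolynomial.X i) ^ (l ^ 2) ∣
        Matrix.det (Matrix.of fun r c : Fin (m * l) =>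
          (((n + (c : ℕ)).choose ((r : ℕ) % l) : ℕ) :
              MvPolynomial (Fin m) ℤ) *
            MvPolynomial.X
              (⟨(r : ℕ) / l, Nat.div_lt_of_lt_mul (Nat.mul_comm m l ▸ r.isLt)⟩ : Fin m)
              ^ (c : ℕ)) :=
  det_block_binom_power_dvd_general m n l
end

section
/- Let n ≥ l ≥ 1 and let X₁, …, X_m be pairwise distinct nonzero elements of an integral domain, m ≥ 1. Then the ml×ml block binomial-power matrix A with blocks Aᵢ = [C(n+j−1, k−1)·Xᵢ^{j−1}]_{1≤k≤l, 1≤j≤ml} is invertible (has nonzero determinant). -/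
/-!
Let `v` be a kernel vector of the matrix and `Q = ∑ⱼ vⱼ Xʲ`, a polynomial of degree `< m l`.
For `r = X_q`, the row `(q, k)` of the matrix applied to `v`, times `rⁿ`, equals `rᵏ` times the
`k`-th Hasse derivative of `Xⁿ Q` at `r`. So `Xⁿ Q` vanishes to order `l` at every `X_q`, and
since `X_q ≠ 0`, so does `Q`. Having `m l` roots counted with multiplicity, `Q` must be zero.
-/

open Polynomial Matrix

namespace Polynomial

variable {R : Type*}

section CommSemiring

variable [CommSemiring R]

theorem X_pow_mul_hasseDeriv_monomial (k i : ℕ) (a : R) :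
    X ^ k * hasseDeriv k (monomial i a) = monomial i (i.choose k * a) := by
  rw [hasseDeriv_monomial]
  rcases le_or_gt k i with hki | hik
  · rw [← monomial_one_right_eq_X_pow, monomial_mul_monomial, one_mul, Nat.add_sub_cancel' hki]
  · simp [Nat.choose_eq_zero_of_lt hik]

/-- The factor `X ^ k` avoids the truncated exponent `n + j - k`. -/
theorem eval_X_pow_mul_hasseDeriv_X_pow_mul_ofFn [DecidableEq R] {N : ℕ} (n k : ℕ)
    (v : Fin N → R) (r : R) :
    (X ^ k * hasseDeriv k (X ^ n * ofFn N v)).eval r =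
      r ^ n * ∑ j : Fin N, ((n + (j : ℕ)).choose k : R) * r ^ (j : ℕ) * v j := by
  simp only [ofFn_eq_sum_monomial, Finset.mul_sum, X_pow_mul_monomial, map_sum,
    X_pow_mul_hasseDeriv_monomial, eval_finsetSum, eval_monomial]
  refine Finset.sum_congr rfl fun j _ => ?_
  rw [Nat.add_comm (j : ℕ) n, pow_add]
  ring

end CommSemiring

section CommRing

variable [CommRing R]

theorem le_rootMultiplicity_of_hasseDeriv_eval_eq_zero {p : R[X]} {r : R} {l : ℕ} (hp : p ≠ 0)
    (h : ∀ k < l, (hasseDeriv k p).eval r = 0) : l ≤ p.rootMultiplicity r := by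
  rw [rootMultiplicity_eq_natTrailingDegree, ← taylor_apply]
  exact le_natTrailingDegree (by rwa [Ne, taylor_eq_zero]) fun k hk => by
    rw [taylor_coeff]
    exact h k hk

theorem sum_rootMultiplicity_le_natDegree [IsDomain R] (p : R[X]) (s : Finset R) :
    ∑ x ∈ s, p.rootMultiplicity x ≤ p.natDegree := by
  classical
  calc ∑ x ∈ s, p.rootMultiplicity x = ∑ x ∈ s, p.roots.count x := by
        simp only [count_roots]
    _ ≤ ∑ x ∈ s ∪ p.roots.toFinset, p.roots.count x :=
      Finset.sum_le_sum_of_subset Finset.subset_union_left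
    _ = Multiset.card p.roots := Multiset.sum_count_eq_card fun x hx =>
        Finset.mem_union_right s (Multiset.mem_toFinset.mpr hx)
    _ ≤ p.natDegree := card_roots' p

end CommRing

end Polynomial

section BlockBinomPowerMatrix

variable {R : Type*} [CommRing R] {m : ℕ}

/-- Row `finProdFinEquiv (q, k)` is row `k` of the block of `x q`. -/
def blockBinomPowerMatrix (n l : ℕ) (x : Fin m → R) : Matrix (Fin (m * l)) (Fin (m * l)) R :=
  Matrix.of fun i j => ((n + (j : ℕ)).choose i.modNat : R) * x i.divNat ^ (j : ℕ)

theorem eval_hasseDeriv_eq_zero_of_mulVec_eq_zero [DecidableEq R] [NoZeroDivisors R] {n l : ℕ}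
    {x : Fin m → R} {v : Fin (m * l) → R} (hv : blockBinomPowerMatrix n l x *ᵥ v = 0)
    {q : Fin m} (hq : x q ≠ 0) {k : ℕ} (hk : k < l) :
    (hasseDeriv k (X ^ n * ofFn (m * l) v)).eval (x q) = 0 := by
  obtain ⟨hdiv, hmod⟩ := Prod.mk.inj (finProdFinEquiv.symm_apply_apply (q, ⟨k, hk⟩))
  have hrow := congrFun hv (finProdFinEquiv (q, ⟨k, hk⟩))
  simp only [mulVec, dotProduct, blockBinomPowerMatrix, of_apply, hdiv, hmod,
    Pi.zero_apply] at hrow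
  have hsum := eval_X_pow_mul_hasseDeriv_X_pow_mul_ofFn n k v (x q)
  rw [hrow, mul_zero, eval_mul, eval_pow, eval_X] at hsum
  exact (mul_eq_zero.mp hsum).resolve_left (pow_ne_zero k hq)

end BlockBinomPowerMatrix

theorem det_block_binom_power_ne_zero_general {R : Type*} [CommRing R] [IsDomain R]
    (m n l : ℕ) (X : Fin m → R)
    (hinj : Function.Injective X) (hne : ∀ i, X i ≠ 0) :
    Matrix.det (Matrix.of fun i j : Fin (m * l) =>
      (((n + (j : ℕ)).choose ((i : ℕ) % l) : ℕ) : R) *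
        X ⟨(i : ℕ) / l, Nat.div_lt_of_lt_mul (Nat.mul_comm m l ▸ i.isLt)⟩ ^ (j : ℕ))
    ≠ 0 := by
  classical
  change (blockBinomPowerMatrix n l X).det ≠ 0
  rw [Ne, ← Matrix.exists_mulVec_eq_zero_iff]
  rintro ⟨v, hv, hAv⟩
  set Q := ofFn (m * l) v
  have hQ : Q ≠ 0 := fun h => hv (injective_ofFn _ (h.trans (ofFn_zero _).symm))
  have hP : Polynomial.X ^ n * Q ≠ 0 := mul_ne_zero (pow_ne_zero n X_ne_zero) hQ
  have hmult (q : Fin m) : l ≤ Q.rootMultiplicity (X q) := by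
    have := le_rootMultiplicity_of_hasseDeriv_eval_eq_zero hP fun k hk =>
      eval_hasseDeriv_eq_zero_of_mulVec_eq_zero hAv (hne q) hk
    rwa [rootMultiplicity_mul hP, rootMultiplicity_eq_zero (by simp [IsRoot, hne q]),
      zero_add] at this
  have hdeg : Q.natDegree < m * l := (natDegree_lt_iff_degree_lt hQ).mpr (ofFn_degree_lt v)
  have hroots : m * l ≤ Q.natDegree := calc
    m * l = ∑ _q : Fin m, l := by simp
    _ ≤ ∑ q, Q.rootMultiplicity (X q) := Finset.sum_le_sum fun q _ => hmult q
    _ = ∑ x ∈ Finset.univ.image X, Q.rootMultiplicity x := by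
      rw [Finset.sum_image hinj.injOn]
    _ ≤ Q.natDegree := sum_rootMultiplicity_le_natDegree Q _
  exact (hdeg.trans_le hroots).false

theorem det_block_binom_power_ne_zero {R : Type*} [CommRing R] [IsDomain R]
    (m n l : ℕ) (hm : 1 ≤ m) (hl : 1 ≤ l) (hn : l ≤ n) (X : Fin m → R)
    (hinj : Function.Injective X) (hne : ∀ i, X i ≠ 0) :
    Matrix.det (Matrix.of fun i j : Fin (m * l) =>
      (((n + (j : ℕ)).choose ((i : ℕ) % l) : ℕ) : R) *
        X ⟨(i : ℕ) / l, Nat.div_lt_of_lt_mul (Nat.mul_comm m l ▸ i.isLt)⟩ ^ (j : ℕ))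
    ≠ 0 :=
  det_block_binom_power_ne_zero_general m n l X hinj hne
end
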